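/- Let n be a positive integer and let a, b, c be an orthonormal triple of vectors in ℝ³. Then for any real constant d, the function F : ℝ³ → ℝ defined by F(x) = d · P_n(a·x, b·x) · sin(c·x) satisfies the Helmholtz equation ΔF = −F (where Δ is the Laplacian on ℝ³). The same conclusion holds if sin is replaced by cos, and/or the polynomial P_n is replaced by Q_n. -/

import Mathlib

noncomputable section

open Real

/-- The standard harmonic polynomial `P_n(x,y) = Re((x+iy)^n)`. -/
def polyP (n : ℕ) (x y : ℝ) : ℝ := ((x + y * Complex.I) ^ n).re

/-- The standard harmonic polynomial `Q_n(x,y) = Im((x+iy)^n)`. -/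
def polyQ (n : ℕ) (x y : ℝ) : ℝ := ((x + y * Complex.I) ^ n).im

/-- Partial derivative in the `i`-th coordinate direction. -/
def pd (i : Fin 3) (F : (Fin 3 → ℝ) → ℝ) : (Fin 3 → ℝ) → ℝ :=
  fun v => deriv (fun t => F (Function.update v i t)) (v i)

/-- Divergence of a vector field on ℝ³. -/
def div3 (V : (Fin 3 → ℝ) → (Fin 3 → ℝ)) : (Fin 3 → ℝ) → ℝ :=
  fun v => pd 0 (fun w => V w 0) v + pd 1 (fun w => V w 1) v + pd 2 (fun w => V w 2) v

/-- Curl of a vector field on ℝ³. -/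
def curl3 (V : (Fin 3 → ℝ) → (Fin 3 → ℝ)) : (Fin 3 → ℝ) → (Fin 3 → ℝ) :=
  fun v => ![pd 1 (fun w => V w 2) v - pd 2 (fun w => V w 1) v,
             pd 2 (fun w => V w 0) v - pd 0 (fun w => V w 2) v,
             pd 0 (fun w => V w 1) v - pd 1 (fun w => V w 0) v]

/-- Laplacian of a scalar function on ℝ³. -/
def lap3 (F : (Fin 3 → ℝ) → ℝ) : (Fin 3 → ℝ) → ℝ :=
  fun v => pd 0 (pd 0 F) v + pd 1 (pd 1 F) v + pd 2 (pd 2 F) v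

/-- Dot product on ℝ³. -/
def dot3 (a x : Fin 3 → ℝ) : ℝ := a 0 * x 0 + a 1 * x 1 + a 2 * x 2

/-! Write `z = a·x + i b·x`, so that `d·Pₙ = Re(d zⁿ)` and `d·Qₙ = Re(-i d zⁿ)`, and consider
`Re(l zᵐ) g(c·x)`. Since `∂ᵢz = aᵢ + i bᵢ =: wᵢ`, two differentiations express its Laplacian
through `∑ wᵢ² = a·a - b·b + 2i a·b`, `∑ cᵢwᵢ = a·c + i b·c` and `∑ cᵢ² = c·c`. For an
orthonormal triple these are `0`, `0` and `1`, so only `Re(l zᵐ) g''(c·x)` survives, which is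
`-F` when `g'' = -g`. -/

lemma HasDerivAt.complex_re {f : ℝ → ℂ} {f' : ℂ} {x : ℝ} (h : HasDerivAt f f' x) :
    HasDerivAt (fun t => (f t).re) f'.re x :=
  Complex.reCLM.hasFDerivAt.comp_hasDerivAt x h

section HarmonicWave

variable (a b c : Fin 3 → ℝ)

def complexify (i : Fin 3) : ℂ := a i + b i * Complex.I

def zCoord (v : Fin 3 → ℝ) : ℂ := dot3 a v + dot3 b v * Complex.I

def harmonicWave (l : ℂ) (m : ℕ) (g : ℝ → ℝ) (v : Fin 3 → ℝ) : ℝ :=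
  (l * zCoord a b v ^ m).re * g (dot3 c v)

lemma hasDerivAt_dot3_update (v : Fin 3 → ℝ) (i : Fin 3) (t : ℝ) :
    HasDerivAt (fun s => dot3 a (Function.update v i s)) (a i) t := by
  have h : ∀ s, dot3 a (Function.update v i s) = dot3 a v + a i * (s - v i) := by
    intro s
    fin_cases i <;>
      simp only [dot3, Function.update_apply, Fin.reduceFinMk, Fin.reduceEq, ite_true,
        ite_false] <;>
      ring
  simp only [h]
  simpa using (((hasDerivAt_id t).sub_const (v i)).const_mul (a i)).const_add (dot3 a v)

lemma hasDerivAt_zCoord_update (v : Fin 3 → ℝ) (i : Fin 3) (t : ℝ) :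
    HasDerivAt (fun s => zCoord a b (Function.update v i s)) (complexify a b i) t :=
  (hasDerivAt_dot3_update a v i t).ofReal_comp.add
    ((hasDerivAt_dot3_update b v i t).ofReal_comp.mul_const Complex.I)

variable {g g' : ℝ → ℝ}

-- `m - 1` truncates at `m = 0`, harmlessly since the coefficient then carries the factor `m = 0`.
lemma hasDerivAt_harmonicWave_update (hg : ∀ t, HasDerivAt g (g' t) t) (l : ℂ) (m : ℕ)
    (v : Fin 3 → ℝ) (i : Fin 3) :
    HasDerivAt (fun t => harmonicWave a b c l m g (Function.update v i t))
      (harmonicWave a b c (l * m * complexify a b i) (m - 1) g v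
        + harmonicWave a b c (l * c i) m g' v) (v i) := by
  have hpow := (((hasDerivAt_zCoord_update a b v i (v i)).fun_pow m).const_mul l).complex_re
  have hg_dot := (hg _).comp (v i) (hasDerivAt_dot3_update c v i (v i))
  rw [Function.update_eq_self] at hpow hg_dot
  refine (hpow.mul hg_dot).congr_deriv ?_
  simp only [harmonicWave, Function.comp_apply, Function.update_eq_self]
  rw [show l * c i * zCoord a b v ^ m = (c i : ℂ) * (l * zCoord a b v ^ m) by ring,
    Complex.re_ofReal_mul]
  ring_nf

lemma pd_harmonicWave (hg : ∀ t, HasDerivAt g (g' t) t) (l : ℂ) (m : ℕ) (i : Fin 3) :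
    pd i (harmonicWave a b c l m g) = fun v =>
      harmonicWave a b c (l * m * complexify a b i) (m - 1) g v
        + harmonicWave a b c (l * c i) m g' v :=
  funext fun v => (hasDerivAt_harmonicWave_update a b c hg l m v i).deriv

lemma pd_pd_harmonicWave {g'' : ℝ → ℝ} (hg : ∀ t, HasDerivAt g (g' t) t)
    (hg' : ∀ t, HasDerivAt g' (g'' t) t) (l : ℂ) (m : ℕ) (i : Fin 3) (v : Fin 3 → ℝ) :
    pd i (pd i (harmonicWave a b c l m g)) v
      = harmonicWave a b c (l * m * complexify a b i * (m - 1 : ℕ) * complexify a b i)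
            (m - 1 - 1) g v
        + harmonicWave a b c (l * m * complexify a b i * c i) (m - 1) g' v
        + harmonicWave a b c (l * c i * m * complexify a b i) (m - 1) g' v
        + harmonicWave a b c (l * c i * c i) m g'' v := by
  rw [pd_harmonicWave a b c hg]
  exact ((hasDerivAt_harmonicWave_update a b c hg _ _ v i).add
    (hasDerivAt_harmonicWave_update a b c hg' _ _ v i)).deriv.trans (by ring)

lemma lap3_harmonicWave {g'' : ℝ → ℝ} (hg : ∀ t, HasDerivAt g (g' t) t)
    (hg' : ∀ t, HasDerivAt g' (g'' t) t) (l : ℂ) (m : ℕ) (v : Fin 3 → ℝ) :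
    lap3 (harmonicWave a b c l m g) v
      = harmonicWave a b c (l * m * (m - 1 : ℕ) * ∑ i, complexify a b i ^ 2) (m - 1 - 1) g v
        + harmonicWave a b c (2 * l * m * ∑ i, c i * complexify a b i) (m - 1) g' v
        + harmonicWave a b c (l * dot3 c c) m g'' v := by
  simp only [lap3, pd_pd_harmonicWave a b c hg hg', harmonicWave, Fin.sum_univ_three, dot3,
    ← Complex.re_mul_ofReal, ← Complex.add_re]
  congr 1
  push_cast
  ring

lemma sum_complexify_sq :
    ∑ i, complexify a b i ^ 2
      = ((dot3 a a - dot3 b b : ℝ) : ℂ) + ((2 * dot3 a b : ℝ) : ℂ) * Complex.I := by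
  simp only [Fin.sum_univ_three, complexify, dot3]
  push_cast
  linear_combination ((b 0 : ℂ) ^ 2 + (b 1 : ℂ) ^ 2 + (b 2 : ℂ) ^ 2) * Complex.I_sq

lemma sum_mul_complexify : ∑ i, (c i : ℂ) * complexify a b i = zCoord a b c := by
  simp only [Fin.sum_univ_three, complexify, zCoord, dot3]
  push_cast
  ring

lemma lap3_harmonicWave_eq_neg (haa : dot3 a a = 1) (hbb : dot3 b b = 1) (hcc : dot3 c c = 1)
    (hab : dot3 a b = 0) (hac : dot3 a c = 0) (hbc : dot3 b c = 0)
    (hg : ∀ t, HasDerivAt g (g' t) t) (hg' : ∀ t, HasDerivAt g' (-g t) t) (l : ℂ) (m : ℕ)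
    (v : Fin 3 → ℝ) :
    lap3 (harmonicWave a b c l m g) v = -harmonicWave a b c l m g v := by
  rw [lap3_harmonicWave a b c hg hg', sum_complexify_sq, sum_mul_complexify, zCoord,
    haa, hbb, hcc, hab, hac, hbc]
  simp [harmonicWave]

lemma mul_polyP_mul_eq_harmonicWave (d : ℝ) (n : ℕ) (g : ℝ → ℝ) (x : Fin 3 → ℝ) :
    d * polyP n (dot3 a x) (dot3 b x) * g (dot3 c x) = harmonicWave a b c d n g x := by
  simp [harmonicWave, polyP, zCoord]

lemma mul_polyQ_mul_eq_harmonicWave (d : ℝ) (n : ℕ) (g : ℝ → ℝ) (x : Fin 3 → ℝ) :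
    d * polyQ n (dot3 a x) (dot3 b x) * g (dot3 c x)
      = harmonicWave a b c (-Complex.I * d) n g x := by
  simp [harmonicWave, polyQ, zCoord, mul_assoc]

end HarmonicWave

theorem helmholtz_solutions (n : ℕ) (a b c : Fin 3 → ℝ)
    (haa : dot3 a a = 1) (hbb : dot3 b b = 1) (hcc : dot3 c c = 1)
    (hab : dot3 a b = 0) (hac : dot3 a c = 0) (hbc : dot3 b c = 0)
    (d : ℝ) :
    (∀ v, lap3 (fun x => d * polyP n (dot3 a x) (dot3 b x) * Real.sin (dot3 c x)) v
        = -(d * polyP n (dot3 a v) (dot3 b v) * Real.sin (dot3 c v))) ∧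
    (∀ v, lap3 (fun x => d * polyP n (dot3 a x) (dot3 b x) * Real.cos (dot3 c x)) v
        = -(d * polyP n (dot3 a v) (dot3 b v) * Real.cos (dot3 c v))) ∧
    (∀ v, lap3 (fun x => d * polyQ n (dot3 a x) (dot3 b x) * Real.sin (dot3 c x)) v
        = -(d * polyQ n (dot3 a v) (dot3 b v) * Real.sin (dot3 c v))) ∧
    (∀ v, lap3 (fun x => d * polyQ n (dot3 a x) (dot3 b x) * Real.cos (dot3 c x)) v
        = -(d * polyQ n (dot3 a v) (dot3 b v) * Real.cos (dot3 c v))) := by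
  have helmholtz (l : ℂ) {g g' : ℝ → ℝ} (hg : ∀ t, HasDerivAt g (g' t) t)
      (hg' : ∀ t, HasDerivAt g' (-g t) t) (v : Fin 3 → ℝ) :
      lap3 (harmonicWave a b c l n g) v = -harmonicWave a b c l n g v :=
    lap3_harmonicWave_eq_neg a b c haa hbb hcc hab hac hbc hg hg' l n v
  have hasDerivAt_neg_sin (t : ℝ) : HasDerivAt (fun t => -sin t) (-cos t) t :=
    (hasDerivAt_sin t).neg
  simp only [mul_polyP_mul_eq_harmonicWave a b c, mul_polyQ_mul_eq_harmonicWave a b c]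
  exact ⟨helmholtz _ hasDerivAt_sin hasDerivAt_cos, helmholtz _ hasDerivAt_cos hasDerivAt_neg_sin,
    helmholtz _ hasDerivAt_sin hasDerivAt_cos, helmholtz _ hasDerivAt_cos hasDerivAt_neg_sin⟩
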